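/- Let f : (X,𝒯₁) → (Y,𝒯₂) be a map between L-fuzzy topological spaces. Then f is L-fuzzy weakly Semi-Preclosed if and only if spC_{𝒯₂}(f_L^→(U),r) ≤ f_L^→(C_{𝒯₁}(U,r)) for each U ∈ L^X and r with 𝒯₁(U) ≥ r. -/
import Mathlib


namespace LFuzzy

/-- A (complete) DeMorgan structure on a complete lattice: an order-reversing involution. -/
structure DeMorgan (L : Type*) [CompleteLattice L] where
  compl : L → L
  compl_antitone : ∀ a b : L, a ≤ b → compl b ≤ compl a
  compl_involutive : ∀ a : L, compl (compl a) = a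

variable {L X Y : Type*} [CompleteLattice L]

/-- Pointwise DeMorgan complement of an L-fuzzy subset. -/
def pcompl (c : DeMorgan L) (U : X → L) : X → L := fun x => c.compl (U x)

/-- An L-fuzzy topology on X. -/
def IsTopology (T : (X → L) → L) : Prop :=
  T ⊥ = ⊤ ∧ T ⊤ = ⊤ ∧ (∀ U V : X → L, T U ⊓ T V ≤ T (U ⊓ V)) ∧
    ∀ S : Set (X → L), (⨅ U ∈ S, T U) ≤ T (sSup S)

/-- r-fuzzy closure operator. -/
def cl (c : DeMorgan L) (T : (X → L) → L) (U : X → L) (r : L) : X → L :=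
  sInf {V | U ≤ V ∧ r ≤ T (pcompl c V)}

/-- r-fuzzy interior operator. -/
def intr (T : (X → L) → L) (U : X → L) (r : L) : X → L :=
  sSup {V | V ≤ U ∧ r ≤ T V}

/-- r-fuzzy Semi-Preopen. -/
def SPO (c : DeMorgan L) (T : (X → L) → L) (U : X → L) (r : L) : Prop :=
  U ≤ cl c T (intr T (cl c T U r) r) r

/-- r-fuzzy Semi-Preclosed. -/
def SPC (c : DeMorgan L) (T : (X → L) → L) (U : X → L) (r : L) : Prop :=
  intr T (cl c T (intr T U r) r) r ≤ U

/-- Semi-Preinterior. -/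
def spInt (c : DeMorgan L) (T : (X → L) → L) (V : X → L) (r : L) : X → L :=
  sSup {W | W ≤ V ∧ SPO c T W r}

/-- Semi-Preclosure. -/
def spCl (c : DeMorgan L) (T : (X → L) → L) (V : X → L) (r : L) : X → L :=
  sInf {W | V ≤ W ∧ SPC c T W r}

/-- r-fuzzy θ-closure. -/
def thCl (c : DeMorgan L) (T : (X → L) → L) (U : X → L) (r : L) : X → L :=
  sInf {V | U ≤ intr T V r ∧ r ≤ T (pcompl c V)}

/-- r-fuzzy θ-interior. -/
def thInt (c : DeMorgan L) (T : (X → L) → L) (U : X → L) (r : L) : X → L :=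
  sSup {V | cl c T V r ≤ U ∧ r ≤ T V}

/-- Image L-fuzzy set operator induced by f. -/
def im (f : X → Y) (U : X → L) : Y → L := fun y => ⨆ x, ⨆ _ : f x = y, U x

/-- Preimage L-fuzzy set operator induced by f. -/
def pre (f : X → Y) (V : Y → L) : X → L := fun x => V (f x)

/-- L-fuzzy weakly open function. -/
def WeaklyOpen (c : DeMorgan L) (T₁ : (X → L) → L) (T₂ : (Y → L) → L) (f : X → Y) : Prop :=
  ∀ (U : X → L) (r : L), r ≠ ⊥ → r ≤ T₁ U →
    im f U ≤ intr T₂ (im f (cl c T₁ U r)) r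

/-- L-fuzzy weakly Semi-Preopen function. -/
def WeaklySPOpen (c : DeMorgan L) (T₁ : (X → L) → L) (T₂ : (Y → L) → L) (f : X → Y) : Prop :=
  ∀ (U : X → L) (r : L), r ≠ ⊥ → r ≤ T₁ U →
    im f U ≤ spInt c T₂ (im f (cl c T₁ U r)) r

/-- L-fuzzy weakly Semi-Preclosed function. -/
def WeaklySPClosed (c : DeMorgan L) (T₁ : (X → L) → L) (T₂ : (Y → L) → L) (f : X → Y) : Prop :=
  ∀ (U : X → L) (r : L), r ≠ ⊥ → r ≤ T₁ (pcompl c U) →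
    spCl c T₂ (im f (intr T₁ U r)) r ≤ im f U

/-- L-fuzzy strongly continuous function. -/
def StronglyCont (c : DeMorgan L) (T₁ : (X → L) → L) (f : X → Y) : Prop :=
  ∀ (U : X → L) (r : L), r ≠ ⊥ → im f (cl c T₁ U r) ≤ im f U

/-- Quasi-coincidence of two L-fuzzy subsets. -/
def Quasi (c : DeMorgan L) (A B : X → L) : Prop := ∃ x, ¬ A x ≤ c.compl (B x)

end LFuzzy

open LFuzzy

variable {L X Y : Type*}


section Aux
variable [CompleteLattice L]

lemma dm_compl_iInf (c : DeMorgan L) {ι : Sort*} (g : ι → L) :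
    c.compl (⨅ i, g i) = ⨆ i, c.compl (g i) := by
  apply le_antisymm
  · have h : c.compl (⨆ i, c.compl (g i)) ≤ ⨅ i, g i := by
      apply le_iInf; intro i
      have := c.compl_antitone _ _ (le_iSup (fun i => c.compl (g i)) i)
      rwa [c.compl_involutive] at this
    have := c.compl_antitone _ _ h
    rwa [c.compl_involutive] at this
  · apply iSup_le; intro i
    exact c.compl_antitone _ _ (iInf_le g i)

lemma le_cl (c : DeMorgan L) (T : (X → L) → L) (U : X → L) (r : L) :
    U ≤ cl c T U r := le_sInf fun V hV => hV.1

lemma cl_le (c : DeMorgan L) (T : (X → L) → L) {U V : X → L} {r : L}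
    (h1 : U ≤ V) (h2 : r ≤ T (pcompl c V)) : cl c T U r ≤ V :=
  sInf_le ⟨h1, h2⟩

lemma le_intr (T : (X → L) → L) {U V : X → L} {r : L}
    (h1 : V ≤ U) (h2 : r ≤ T V) : V ≤ intr T U r :=
  le_sSup ⟨h1, h2⟩

lemma intr_open (T : (X → L) → L) (hT : IsTopology T) (U : X → L) (r : L) :
    r ≤ T (intr T U r) := by
  refine le_trans ?_ (hT.2.2.2 {V | V ≤ U ∧ r ≤ T V})
  exact le_iInf fun V => le_iInf fun hV => hV.2

lemma cl_closed (c : DeMorgan L) (T : (X → L) → L) (hT : IsTopology T)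
    (U : X → L) (r : L) : r ≤ T (pcompl c (cl c T U r)) := by
  have key : pcompl c (cl c T U r) =
      sSup ((pcompl c) '' {V | U ≤ V ∧ r ≤ T (pcompl c V)}) := by
    funext x
    have h1 : pcompl c (cl c T U r) x
        = c.compl (⨅ V : {V | U ≤ V ∧ r ≤ T (pcompl c V)}, (V : X → L) x) := by
      simp [pcompl, cl, sInf_apply]
    rw [h1, dm_compl_iInf c]
    rw [sSup_image]
    rw [iSup_apply]
    rw [iSup_subtype]
    congr 1
    funext V
    rw [iSup_apply]
    rfl
  rw [key]
  refine le_trans ?_ (hT.2.2.2 _)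
  refine le_iInf fun W => le_iInf fun hW => ?_
  obtain ⟨V, hV, rfl⟩ := hW
  exact hV.2

lemma im_mono (f : X → Y) {U V : X → L} (h : U ≤ V) : im f U ≤ im f V := by
  intro y
  exact iSup_mono fun x => iSup_mono fun _ => h x

lemma spCl_mono (c : DeMorgan L) (T : (Y → L) → L) {A B : Y → L} (r : L)
    (h : A ≤ B) : spCl c T A r ≤ spCl c T B r := by
  apply sInf_le_sInf
  intro W hW
  exact ⟨le_trans h hW.1, hW.2⟩

end Aux

theorem stmt16 [CompleteLattice L] (c : DeMorgan L)
    (T₁ : (X → L) → L) (T₂ : (Y → L) → L) (hT₁ : IsTopology T₁) (hT₂ : IsTopology T₂)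
    (f : X → Y) :
    WeaklySPClosed c T₁ T₂ f ↔
      ∀ (U : X → L) (r : L), r ≠ ⊥ → r ≤ T₁ U →
        spCl c T₂ (im f U) r ≤ im f (cl c T₁ U r) := by
  constructor
  · intro h U r hr hU
    have hcl := cl_closed c T₁ hT₁ U r
    have h2 := h (cl c T₁ U r) r hr hcl
    refine le_trans ?_ h2
    apply spCl_mono
    apply im_mono
    exact le_intr T₁ (le_cl c T₁ U r) hU
  · intro h U r hr hU
    have hW : r ≤ T₁ (intr T₁ U r) := intr_open T₁ hT₁ U r
    have h2 := h (intr T₁ U r) r hr hW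
    refine le_trans h2 (im_mono f ?_)
    refine cl_le c T₁ ?_ hU
    exact sSup_le fun V hV => hV.1
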